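/- arXiv:2411.11113 — 9 statements merged into one kernel-verified Lean document; each statement's English description precedes it below -/
import Mathlib

section
/- Let L be a complete lattice with a monoid structure whose multiplication is monotone in each argument, and let a ∈ L be such that left multiplication by a preserves infima of antitone sequences, i.e. a * (⨅_{n∈ℕ} u n) = ⨅_{n∈ℕ} (a * u n) for every antitone u : ℕ → L. Then the greatest fixed point of the monotone map x ↦ a * x equals ⨅_{n∈ℕ} (a^n * ⊤). (This is the paper's 'infinite body iterations' lemma characterizing nonterminating loop behaviour, in the lower-continuous case where the iterates stabilize at ω.) -/
/-- In a complete lattice with a monoid structure whose multiplication is monotone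
in each argument, if left multiplication by `a` preserves infima of antitone ℕ-sequences,
then the greatest fixed point of the monotone map `x ↦ a * x` is `⨅ n, a ^ n * ⊤`. -/
theorem gfp_infinite_body_iterations
    {L : Type*} [CompleteLattice L] [Monoid L]
    (hmul_mono_left : ∀ a : L, Monotone (fun x : L => a * x))
    (hmul_mono_right : ∀ a : L, Monotone (fun x : L => x * a))
    (a : L)
    (ha : ∀ u : ℕ → L, Antitone u → a * (⨅ n, u n) = ⨅ n, a * u n) :
    OrderHom.gfp ⟨fun x : L => a * x, hmul_mono_left a⟩ = ⨅ n : ℕ, a ^ n * ⊤ := by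
  set f : L →o L := ⟨fun x : L => a * x, hmul_mono_left a⟩ with hf
  have hstep : ∀ n : ℕ, a ^ (n+1) * ⊤ ≤ a ^ n * ⊤ := by
    intro n
    have : a * ⊤ ≤ ⊤ := le_top
    calc a ^ (n+1) * ⊤ = a ^ n * (a * ⊤) := by rw [pow_succ, mul_assoc]
    _ ≤ a ^ n * ⊤ := hmul_mono_left _ this
  have hanti : Antitone fun n : ℕ => a ^ n * ⊤ :=
    antitone_nat_of_succ_le hstep
  have hfix : f (⨅ n : ℕ, a ^ n * ⊤) = ⨅ n : ℕ, a ^ n * ⊤ := by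
    have h1 : f (⨅ n : ℕ, a ^ n * ⊤) = ⨅ n : ℕ, a ^ (n+1) * ⊤ := by
      show a * (⨅ n : ℕ, a ^ n * ⊤) = _
      rw [ha _ hanti]
      congr 1; funext n; rw [pow_succ', mul_assoc]
    rw [h1]
    apply le_antisymm
    · exact le_iInf fun n => (iInf_le _ n).trans (hstep n)
    · exact le_iInf fun n => iInf_le _ (n+1)
  apply le_antisymm
  · apply le_iInf
    intro n
    induction n with
    | zero => simp
    | succ n ih =>
      have : f f.gfp ≤ f (a ^ n * ⊤) := f.mono ih
      rw [f.map_gfp] at this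
      calc f.gfp ≤ a * (a ^ n * ⊤) := this
      _ = a ^ (n+1) * ⊤ := by rw [pow_succ', mul_assoc]
  · exact f.le_gfp hfix.ge
end

section
/- Let L be a complete lattice and f : L → L a map preserving arbitrary suprema, i.e. f (sSup S) = ⨆ x ∈ S, f x for every S ⊆ L. Let 𝒬 ⊆ L be principal-ideal closed, i.e. 𝒬 = {q ∈ L | q ≤ sSup 𝒬}. Then for every 𝒫 ⊆ L: (∀ P ∈ 𝒫, f P ∈ 𝒬) if and only if f (sSup 𝒫) ≤ sSup 𝒬. (Soundness and completeness of the paper's simplified proof rule for principal-ideal-closed hyperproperties.) -/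
/-- Soundness and completeness of the simplified proof rule for
principal-ideal-closed hyperproperties: if `f` preserves arbitrary suprema and
`Q` is principal-ideal closed, then `∀ p ∈ P, f p ∈ Q` iff `f (sSup P) ≤ sSup Q`. -/
theorem principal_ideal_rule_sound_and_complete
    {L : Type*} [CompleteLattice L] (f : L → L)
    (hf : ∀ S : Set L, f (sSup S) = ⨆ x ∈ S, f x)
    (Q : Set L) (hQ : Q = {q : L | q ≤ sSup Q})
    (P : Set L) :
    (∀ p ∈ P, f p ∈ Q) ↔ f (sSup P) ≤ sSup Q := by
  constructor
  · intro h
    rw [hf]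
    exact iSup₂_le fun p hp => by have := h p hp; rw [hQ] at this; exact this
  · intro h p hp
    rw [hQ]
    refine le_trans ?_ h
    rw [hf]
    exact le_iSup₂ (f := fun x _ => f x) p hp
end

section
/- Let L be a partially ordered set. If 𝒫₁ = α^⊒(α^F̲(𝒬₁)) and 𝒫₂ = α^⊒(α^F̲(𝒬₂)) for some subsets 𝒬₁, 𝒬₂ of L, then 𝒫₁ ∪ 𝒫₂ is also in the range of α^⊒ ∘ α^F̲; indeed 𝒫₁ ∪ 𝒫₂ = α^⊒(α^F̲(α^F̲(𝒬₁) ∪ α^F̲(𝒬₂))). Hence the family of frontier order-filter abstract hyperproperties is closed under binary union. -/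
/-- The lower frontier: minimal elements of a subset of a poset. -/
def minFrontier {L : Type*} [PartialOrder L] (P : Set L) : Set L :=
  {x : L | x ∈ P ∧ ∀ x' ∈ P, x' ≤ x → x' = x}

/-- The order-filter (upper-closure) abstraction. -/
def upClose {L : Type*} [LE L] (P : Set L) : Set L :=
  {y : L | ∃ x ∈ P, x ≤ y}

lemma aux_min {L : Type*} [PartialOrder L] (Q₁ Q₂ : Set L) {x : L}
    (hx : x ∈ minFrontier Q₁) :
    ∃ m ∈ minFrontier (minFrontier Q₁ ∪ minFrontier Q₂), m ≤ x := by
  by_cases h : ∃ x' ∈ minFrontier Q₂, x' ≤ x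
  · obtain ⟨x', hx', hle⟩ := h
    refine ⟨x', ⟨Or.inr hx', ?_⟩, hle⟩
    rintro z (hz | hz) hzle
    · have hzx : z = x := hx.2 z hz.1 (hzle.trans hle)
      have hx'x : x' = x := le_antisymm hle (hzx ▸ hzle)
      rw [hzx, hx'x]
    · exact hx'.2 z hz.1 hzle
  · refine ⟨x, ⟨Or.inl hx, ?_⟩, le_refl x⟩
    rintro z (hz | hz) hzle
    · exact hx.2 z hz.1 hzle
    · exact absurd ⟨z, hz, hzle⟩ h

/-- Frontier order-filter abstract hyperproperties are closed under binary union: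
if `P₁ = α^⊒(α^F̲(Q₁))` and `P₂ = α^⊒(α^F̲(Q₂))` then
`P₁ ∪ P₂ = α^⊒(α^F̲(α^F̲(Q₁) ∪ α^F̲(Q₂)))`. -/
theorem frontier_order_filter_union
    {L : Type*} [PartialOrder L] (Q₁ Q₂ P₁ P₂ : Set L)
    (h₁ : P₁ = upClose (minFrontier Q₁))
    (h₂ : P₂ = upClose (minFrontier Q₂)) :
    P₁ ∪ P₂ = upClose (minFrontier (minFrontier Q₁ ∪ minFrontier Q₂)) := by
  subst h₁ h₂
  ext y
  constructor
  · rintro (⟨x, hx, hxy⟩ | ⟨x, hx, hxy⟩)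
    · obtain ⟨m, hm, hmx⟩ := aux_min Q₁ Q₂ hx
      exact ⟨m, hm, hmx.trans hxy⟩
    · obtain ⟨m, hm, hmx⟩ := aux_min Q₂ Q₁ hx
      rw [Set.union_comm] at hm
      exact ⟨m, hm, hmx.trans hxy⟩
  · rintro ⟨m, hm, hmy⟩
    rcases hm.1 with hm1 | hm1
    · exact Or.inl ⟨m, hm1, hmy⟩
    · exact Or.inr ⟨m, hm1, hmy⟩
end

section
/- Let Π be a type and A ⊆ Π × Π. The ∀∃-hyperproperty 𝒫_A = {P : Set Π | ∀ π₁ ∈ P, ∃ π₂ ∈ P, (π₁, π₂) ∈ A} is a fixed point of the increasing-chain-limit abstraction on subsets of Set Π ordered by inclusion: α^↑(𝒫_A) = 𝒫_A. (Hence forall-exists hyperproperties are subsumed by the chain-limit abstract semantic properties.) -/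
/-- The increasing-chain-limit abstraction: add suprema of monotone ℕ-sequences. -/
def alphaUp {L : Type*} [CompleteLattice L] (P : Set L) : Set L :=
  {x : L | ∃ u : ℕ → L, Monotone u ∧ (∀ n, u n ∈ P) ∧ x = ⨆ n, u n}

/-- The ∀∃-hyperproperty `{P | ∀ π₁ ∈ P, ∃ π₂ ∈ P, (π₁, π₂) ∈ A}` is a fixed point
of the increasing-chain-limit abstraction on subsets of `Set Tr`. -/
theorem forall_exists_hyperproperty_chain_limit_fixed
    {Tr : Type*} (A : Set (Tr × Tr)) :
    alphaUp {P : Set Tr | ∀ π₁ ∈ P, ∃ π₂ ∈ P, (π₁, π₂) ∈ A}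
      = {P : Set Tr | ∀ π₁ ∈ P, ∃ π₂ ∈ P, (π₁, π₂) ∈ A} := by
  ext P
  constructor
  · rintro ⟨u, _, hu, rfl⟩ π₁ hπ₁
    rw [Set.iSup_eq_iUnion, Set.mem_iUnion] at hπ₁
    obtain ⟨n, hn⟩ := hπ₁
    obtain ⟨π₂, hπ₂, hA⟩ := hu n π₁ hn
    exact ⟨π₂, by rw [Set.iSup_eq_iUnion]; exact Set.mem_iUnion.mpr ⟨n, hπ₂⟩, hA⟩
  · intro hP
    exact ⟨fun _ => P, monotone_const, fun _ => hP, (iSup_const).symm⟩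
end

section
/- Let 𝒩 = {univ \ {n} | n ∈ ℕ} ⊆ Set ℕ, the family of all cofinite sets missing exactly one natural number. Then univ ∉ α^⊑(α^↑(𝒩)) while univ ∈ α^⊑(α^↑(α^⊑(α^↑(𝒩)))). Consequently the chain-limit order-ideal operator α^⊑ ∘ α^↑ on subsets of Set ℕ is not idempotent. -/
/-- The order-ideal (lower-closure) abstraction. -/
def lowClose {L : Type*} [LE L] (P : Set L) : Set L :=
  {y : L | ∃ x ∈ P, y ≤ x}

/-- The family of all cofinite subsets of ℕ missing exactly one natural number. -/
def calN : Set (Set ℕ) :=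
  {S : Set ℕ | ∃ n : ℕ, S = Set.univ \ {n}}

/-- `univ ∉ α^⊑(α^↑(𝒩))` but `univ ∈ α^⊑(α^↑(α^⊑(α^↑(𝒩))))`; hence the chain-limit
order-ideal operator `α^⊑ ∘ α^↑` is not idempotent. -/
theorem chain_limit_order_ideal_not_idempotent :
    Set.univ ∉ lowClose (alphaUp calN) ∧
    Set.univ ∈ lowClose (alphaUp (lowClose (alphaUp calN))) ∧
    lowClose (alphaUp (lowClose (alphaUp calN))) ≠ lowClose (alphaUp calN) := by
  have h1 : Set.univ ∉ lowClose (alphaUp calN) := by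
    rintro ⟨x, ⟨u, mono, hmem, rfl⟩, hle⟩
    obtain ⟨k0, hk0⟩ := hmem 0
    have hk : (k0 : ℕ) ∈ ⨆ n, u n := hle (Set.mem_univ k0)
    simp only [Set.iSup_eq_iUnion, Set.mem_iUnion] at hk
    obtain ⟨n, hn⟩ := hk
    obtain ⟨kn, hkn⟩ := hmem n
    rw [hkn] at hn
    have hne : kn ≠ k0 := fun h => hn.2 (by simp [h])
    have h0 : kn ∈ u 0 := by
      rw [hk0]; exact ⟨trivial, by simp [hne]⟩
    have := mono (Nat.zero_le n) h0
    rw [hkn] at this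
    exact this.2 rfl
  have h2 : Set.univ ∈ lowClose (alphaUp (lowClose (alphaUp calN))) := by
    refine ⟨Set.univ, ⟨fun n => Set.Iio n, fun a b hab => Set.Iio_subset_Iio hab,
      fun n => ?_, ?_⟩, le_refl _⟩
    · refine ⟨Set.univ \ {n}, ⟨fun _ => Set.univ \ {n}, monotone_const,
        fun _ => ⟨n, rfl⟩, by simp⟩, ?_⟩
      intro k hk
      exact ⟨trivial, by simp [Nat.ne_of_lt hk]⟩
    · ext k
      simp only [Set.iSup_eq_iUnion, Set.mem_iUnion, Set.mem_Iio]
      exact ⟨fun _ => ⟨k + 1, Nat.lt_succ_self k⟩, fun _ => trivial⟩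
  exact ⟨h1, h2, fun h => h1 (h ▸ h2)⟩
end

section
/- Let L be a partially ordered set. For every 𝒫 ⊆ L, the frontier ϱ-elimination operator satisfies: (a) ϱ^{⊑F̲}(𝒫) ⊆ 𝒫 (reductive); (b) α^F̲(ϱ^{⊑F̲}(𝒫)) = α^F̲(𝒫) (it preserves lower frontiers); and (c) ϱ^{⊑F̲}(ϱ^{⊑F̲}(𝒫)) = ϱ^{⊑F̲}(𝒫) (idempotent). -/
/-- `φ^⊑(F)(X)`: elements of `X` above `F` whose whole interval down to `F` lies in `X`. -/
def phiLow {L : Type*} [PartialOrder L] (F : L) (X : Set L) : Set L :=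
  {x : L | x ∈ X ∧ F ≤ x ∧ ∀ y : L, F ≤ y → y ≤ x → y ∈ X}

/-- The frontier ϱ-elimination operator `ϱ^{⊑F̲}`. -/
def rhoFrontier {L : Type*} [PartialOrder L] (X : Set L) : Set L :=
  ⋃ F ∈ minFrontier X, phiLow F X

lemma rho_subset {L : Type*} [PartialOrder L] (P : Set L) : rhoFrontier P ⊆ P := by
  intro x hx
  simp only [rhoFrontier, Set.mem_iUnion] at hx
  obtain ⟨F, _, hx⟩ := hx
  exact hx.1

lemma mem_rho_of_min {L : Type*} [PartialOrder L] {P : Set L} {F : L}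
    (hF : F ∈ minFrontier P) : F ∈ rhoFrontier P := by
  simp only [rhoFrontier, Set.mem_iUnion]
  exact ⟨F, hF, hF.1, le_refl F, fun y hy hy' => (le_antisymm hy' hy ▸ hF.1)⟩

lemma minFrontier_rho {L : Type*} [PartialOrder L] (P : Set L) :
    minFrontier (rhoFrontier P) = minFrontier P := by
  ext x
  constructor
  · rintro ⟨hx, hmin⟩
    have hx' := hx
    simp only [rhoFrontier, Set.mem_iUnion] at hx'
    obtain ⟨F, hF, hxF⟩ := hx'
    have hFx : F = x := hmin F (mem_rho_of_min hF) hxF.2.1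
    exact hFx ▸ hF
  · intro hx
    exact ⟨mem_rho_of_min hx, fun x' hx' hle => hx.2 x' (rho_subset P hx') hle⟩

/-- The frontier ϱ-elimination operator is reductive, preserves lower frontiers,
and is idempotent. -/
theorem rhoFrontier_properties {L : Type*} [PartialOrder L] (P : Set L) :
    rhoFrontier P ⊆ P ∧
    minFrontier (rhoFrontier P) = minFrontier P ∧
    rhoFrontier (rhoFrontier P) = rhoFrontier P := by
  refine ⟨rho_subset P, minFrontier_rho P, ?_⟩
  apply Set.Subset.antisymm (rho_subset _)
  intro x hx
  have hx' := hx
  simp only [rhoFrontier, Set.mem_iUnion] at hx' ⊢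
  obtain ⟨F, hF, hxP, hFx, hint⟩ := hx'
  have hFmem : F ∈ minFrontier (rhoFrontier P) := (minFrontier_rho P).symm ▸ hF
  refine ⟨F, hFmem, hx, hFx, fun y hFy hyx => ?_⟩
  simp only [rhoFrontier, Set.mem_iUnion]
  exact ⟨F, hF, hint y hFy hyx, hFy, fun z hFz hzy => hint z hFz (hzy.trans hyx)⟩
end

section
/- Let Π be a type and A ⊆ Π × Π. The ∃∀-hyperproperty 𝒫_A = {P : Set Π | ∃ π₁ ∈ P, ∀ π₂ ∈ P, (π₁, π₂) ∈ A} is a fixed point of the frontier ϱ-elimination operator on subsets of Set Π ordered by inclusion: ϱ^{⊑F̲}(𝒫_A) = 𝒫_A. (Hence exists-forall hyperproperties are subsumed by the frontier ϱ-elimination abstract semantic properties.) -/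
/-- The ∃∀-hyperproperty `{P | ∃ π₁ ∈ P, ∀ π₂ ∈ P, (π₁, π₂) ∈ A}` is a fixed point
of the frontier ϱ-elimination operator on subsets of `Set Tr`. -/
theorem exists_forall_hyperproperty_rhoFrontier_fixed
    {Tr : Type*} (A : Set (Tr × Tr)) :
    rhoFrontier {P : Set Tr | ∃ π₁ ∈ P, ∀ π₂ ∈ P, (π₁, π₂) ∈ A}
      = {P : Set Tr | ∃ π₁ ∈ P, ∀ π₂ ∈ P, (π₁, π₂) ∈ A} := by
  set X : Set (Set Tr) := {P : Set Tr | ∃ π₁ ∈ P, ∀ π₂ ∈ P, (π₁, π₂) ∈ A} with hX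
  ext P
  simp only [rhoFrontier, Set.mem_iUnion]
  constructor
  · rintro ⟨F, hF, hP⟩
    exact hP.1
  · intro hP
    have hPmem := hP
    obtain ⟨π₁, hπ₁P, hA⟩ := hP
    refine ⟨{π₁}, ⟨⟨⟨π₁, rfl, ?_⟩, ?_⟩, hPmem, Set.singleton_subset_iff.2 hπ₁P, ?_⟩⟩
    · intro π₂ h
      exact hA π₂ (Set.mem_singleton_iff.1 h ▸ hπ₁P)
    · rintro P' ⟨π', hπ'P', _⟩ hle
      have : π' = π₁ := hle hπ'P'
      subst this
      exact le_antisymm hle (Set.singleton_subset_iff.2 hπ'P')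
    · intro y h1 h2
      exact ⟨π₁, h1 rfl, fun π₂ hπ₂ => hA π₂ (h2 hπ₂)⟩
end

section
/- Let L be a unital quantale and let p, b, s, nb ∈ L satisfy nb * nb = nb and nb * b = ⊥. Then the least fixed point of the monotone map x ↦ p ⊔ (x * ((b * s) ⊔ nb)) equals (⨆_{n∈ℕ} p * (b*s)^n * nb) ⊔ (⨆_{n∈ℕ} p * (b*s)^n). (Closed form of the while-loop accumulation fixpoint used in the ∀∃-hyperproperty proof rule.) -/
/-- Closed form of the while-loop accumulation fixpoint in a unital quantale:
with `nb * nb = nb` and `nb * b = ⊥`, the least fixed point of the monotone map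
`x ↦ p ⊔ x * ((b * s) ⊔ nb)` is `(⨆ n, p * (b*s)^n * nb) ⊔ (⨆ n, p * (b*s)^n)`. -/
theorem while_accumulation_lfp_closed_form
    {L : Type*} [CompleteLattice L] [Monoid L]
    (hmul_sSup : ∀ (a : L) (S : Set L), a * sSup S = ⨆ x ∈ S, a * x)
    (hsSup_mul : ∀ (a : L) (S : Set L), sSup S * a = ⨆ x ∈ S, x * a)
    (p b s nb : L) (hnb : nb * nb = nb) (hnbb : nb * b = ⊥) :
    Monotone (fun x : L => p ⊔ x * (b * s ⊔ nb)) ∧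
      ∀ h : Monotone (fun x : L => p ⊔ x * (b * s ⊔ nb)),
        OrderHom.lfp ⟨fun x : L => p ⊔ x * (b * s ⊔ nb), h⟩ =
          (⨆ n : ℕ, p * (b * s) ^ n * nb) ⊔ (⨆ n : ℕ, p * (b * s) ^ n) := by
  -- binary and indexed distributivity
  have hsup_mul : ∀ x y a : L, (x ⊔ y) * a = x * a ⊔ y * a := by
    intro x y a
    have := hsSup_mul a ({x, y} : Set L)
    rwa [sSup_pair, iSup_pair] at this
  have hmul_sup : ∀ a x y : L, a * (x ⊔ y) = a * x ⊔ a * y := by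
    intro a x y
    have := hmul_sSup a ({x, y} : Set L)
    rwa [sSup_pair, iSup_pair] at this
  have hmul_bot : ∀ a : L, a * ⊥ = ⊥ := by
    intro a
    have := hmul_sSup a (∅ : Set L)
    simpa using this
  have hbot_mul : ∀ a : L, (⊥ : L) * a = ⊥ := by
    intro a
    have := hsSup_mul a (∅ : Set L)
    simpa using this
  have hiSup_mul : ∀ (g : ℕ → L) (a : L), (⨆ n, g n) * a = ⨆ n, g n * a := by
    intro g a
    have := hsSup_mul a (Set.range g)
    rwa [sSup_range, iSup_range] at this
  have hmono_r : ∀ {x y : L} (a : L), x ≤ y → x * a ≤ y * a := by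
    intro x y a hxy
    calc x * a ≤ x * a ⊔ y * a := le_sup_left
      _ = (x ⊔ y) * a := (hsup_mul x y a).symm
      _ = y * a := by rw [sup_eq_right.2 hxy]
  have hmono_l : ∀ {x y : L} (a : L), x ≤ y → a * x ≤ a * y := by
    intro x y a hxy
    calc a * x ≤ a * x ⊔ a * y := le_sup_left
      _ = a * (x ⊔ y) := (hmul_sup a x y).symm
      _ = a * y := by rw [sup_eq_right.2 hxy]
  have hmon : Monotone (fun x : L => p ⊔ x * (b * s ⊔ nb)) := by
    intro x y hxy
    exact sup_le_sup_left (hmono_r _ hxy) p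
  refine ⟨hmon, fun h => ?_⟩
  set f : L →o L := ⟨fun x : L => p ⊔ x * (b * s ⊔ nb), h⟩ with hf
  set c : L := (⨆ n : ℕ, p * (b * s) ^ n * nb) ⊔ (⨆ n : ℕ, p * (b * s) ^ n) with hc
  have hp_le_c : p ≤ c := by
    have : p = p * (b * s) ^ 0 := by simp
    calc p = p * (b * s) ^ 0 := this
      _ ≤ ⨆ n : ℕ, p * (b * s) ^ n := le_iSup (fun n => p * (b * s) ^ n) 0
      _ ≤ c := le_sup_right
  apply le_antisymm
  · -- lfp ≤ c : show c is a prefixed point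
    apply OrderHom.lfp_le
    show p ⊔ c * (b * s ⊔ nb) ≤ c
    have hterm1 : ∀ n : ℕ, (p * (b * s) ^ n * nb) * (b * s ⊔ nb) = p * (b * s) ^ n * nb := by
      intro n
      rw [hmul_sup]
      have h1 : (p * (b * s) ^ n * nb) * (b * s) = ⊥ := by
        calc (p * (b * s) ^ n * nb) * (b * s)
            = p * (b * s) ^ n * (nb * b) * s := by
              rw [← mul_assoc, mul_assoc (p * (b * s) ^ n) nb b]
          _ = ⊥ := by rw [hnbb, hmul_bot, hbot_mul]
      have h2 : (p * (b * s) ^ n * nb) * nb = p * (b * s) ^ n * nb := by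
        rw [mul_assoc, hnb]
      rw [h1, h2, bot_sup_eq]
    have hterm2 : ∀ n : ℕ, (p * (b * s) ^ n) * (b * s ⊔ nb) =
        p * (b * s) ^ (n + 1) ⊔ p * (b * s) ^ n * nb := by
      intro n
      rw [hmul_sup, mul_assoc, ← pow_succ]
    have hcq : c * (b * s ⊔ nb) ≤ c := by
      rw [hc, hsup_mul, hiSup_mul, hiSup_mul]
      apply sup_le
      · apply iSup_le
        intro n
        rw [hterm1 n]
        exact (le_iSup (fun n => p * (b * s) ^ n * nb) n).trans le_sup_left
      · apply iSup_le
        intro n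
        rw [hterm2 n]
        apply sup_le
        · exact le_trans (le_iSup (fun n => p * (b * s) ^ n) (n + 1)) le_sup_right
        · exact le_trans (le_iSup (fun n => p * (b * s) ^ n * nb) n) le_sup_left
    exact sup_le hp_le_c hcq
  · -- c ≤ lfp
    have hfix : p ⊔ OrderHom.lfp f * (b * s ⊔ nb) = OrderHom.lfp f := f.map_lfp
    have hp_le : p ≤ OrderHom.lfp f := le_sup_left.trans hfix.le
    have hq_le : ∀ x : L, x ≤ OrderHom.lfp f → x * (b * s ⊔ nb) ≤ OrderHom.lfp f := by
      intro x hx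
      calc x * (b * s ⊔ nb) ≤ OrderHom.lfp f * (b * s ⊔ nb) := hmono_r _ hx
        _ ≤ OrderHom.lfp f := le_sup_right.trans hfix.le
    have hpow : ∀ n : ℕ, p * (b * s) ^ n ≤ OrderHom.lfp f := by
      intro n
      induction n with
      | zero => simpa using hp_le
      | succ n ih =>
        have : p * (b * s) ^ (n + 1) = (p * (b * s) ^ n) * (b * s) := by
          rw [mul_assoc, ← pow_succ]
        rw [this]
        calc (p * (b * s) ^ n) * (b * s) ≤ (p * (b * s) ^ n) * (b * s ⊔ nb) :=
              hmono_l _ le_sup_left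
          _ ≤ OrderHom.lfp f := hq_le _ ih
    have hpownb : ∀ n : ℕ, p * (b * s) ^ n * nb ≤ OrderHom.lfp f := by
      intro n
      calc p * (b * s) ^ n * nb ≤ p * (b * s) ^ n * (b * s ⊔ nb) := hmono_l _ le_sup_right
        _ ≤ OrderHom.lfp f := hq_le _ (hpow n)
    exact sup_le (iSup_le hpownb) (iSup_le hpow)
end

section
/- Let L be a unital quantale and let p, b, s, nb ∈ L satisfy nb * nb = nb and nb * b = ⊥. Then (lfp (x ↦ p ⊔ (x * ((b * s) ⊔ nb)))) * nb = ⨆_{n∈ℕ} p * (b*s)^n * nb. (Characterization of the strongest postcondition of a while loop: filtering the loop accumulation fixpoint by the negated test yields exactly the results after n iterations of the body followed by loop exit, for all n.) -/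
/-- Strongest postcondition of a while loop in a unital quantale: with
`nb * nb = nb` and `nb * b = ⊥`, filtering the loop accumulation fixpoint
`lfp (x ↦ p ⊔ x * ((b * s) ⊔ nb))` by the negated test `nb` yields exactly
`⨆ n, p * (b*s)^n * nb`. -/
theorem while_postcondition_characterization
    {L : Type*} [CompleteLattice L] [Monoid L]
    (hmul_sSup : ∀ (a : L) (S : Set L), a * sSup S = ⨆ x ∈ S, a * x)
    (hsSup_mul : ∀ (a : L) (S : Set L), sSup S * a = ⨆ x ∈ S, x * a)
    (p b s nb : L) (hnb : nb * nb = nb) (hnbb : nb * b = ⊥) :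
    Monotone (fun x : L => p ⊔ x * (b * s ⊔ nb)) ∧
      ∀ h : Monotone (fun x : L => p ⊔ x * (b * s ⊔ nb)),
        OrderHom.lfp ⟨fun x : L => p ⊔ x * (b * s ⊔ nb), h⟩ * nb =
          ⨆ n : ℕ, p * (b * s) ^ n * nb := by
  -- basic distributivity facts
  have sup_mul' : ∀ x y a : L, (x ⊔ y) * a = x * a ⊔ y * a := by
    intro x y a
    rw [← sSup_pair, hsSup_mul, iSup_pair]
  have mul_sup' : ∀ a x y : L, a * (x ⊔ y) = a * x ⊔ a * y := by
    intro a x y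
    rw [← sSup_pair, hmul_sSup, iSup_pair]
  have bot_mul' : ∀ a : L, (⊥ : L) * a = ⊥ := by
    intro a
    have := hsSup_mul a (∅ : Set L)
    simpa using this
  have iSup_mul' : ∀ (f : ℕ → L) (a : L), (⨆ n, f n) * a = ⨆ n, f n * a := by
    intro f a
    rw [← sSup_range, hsSup_mul, iSup_range]
  have mul_le_mul_right' : ∀ {x y : L} (a : L), x ≤ y → x * a ≤ y * a := by
    intro x y a hxy
    have : y * a = x * a ⊔ y * a := by
      rw [← sup_mul', sup_eq_right.mpr hxy]
    rw [this]; exact le_sup_left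
  have mul_le_mul_left' : ∀ {x y : L} (a : L), x ≤ y → a * x ≤ a * y := by
    intro x y a hxy
    have : a * y = a * x ⊔ a * y := by
      rw [← mul_sup', sup_eq_right.mpr hxy]
    rw [this]; exact le_sup_left
  have hmono : Monotone (fun x : L => p ⊔ x * (b * s ⊔ nb)) := by
    intro x y hxy
    exact sup_le_sup_left (mul_le_mul_right' _ hxy) p
  refine ⟨hmono, fun h => ?_⟩
  set f : L →o L := ⟨fun x : L => p ⊔ x * (b * s ⊔ nb), h⟩ with hf
  set q : L := ⨆ n : ℕ, p * (b * s) ^ n with hq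
  have hfix : p ⊔ OrderHom.lfp f * (b * s ⊔ nb) = OrderHom.lfp f := OrderHom.map_lfp f
  -- q * (b*s) ≤ q
  have hqbs : q * (b * s) ≤ q := by
    rw [hq, iSup_mul']
    refine iSup_le fun n => ?_
    have : p * (b * s) ^ n * (b * s) = p * (b * s) ^ (n + 1) := by
      rw [pow_succ, mul_assoc]
    rw [this]
    exact le_iSup (fun n => p * (b * s) ^ n) (n + 1)
  have hpq : p ≤ q := by
    have := le_iSup (fun n => p * (b * s) ^ n) 0
    simpa using this
  -- q ⊔ q * nb is a prefixed point
  have hpre : f (q ⊔ q * nb) ≤ q ⊔ q * nb := by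
    show p ⊔ (q ⊔ q * nb) * (b * s ⊔ nb) ≤ q ⊔ q * nb
    have e1 : q * nb * (b * s) = ⊥ := by
      rw [← mul_assoc, mul_assoc q nb b, hnbb]
      rw [show q * ⊥ = ⊥ from by simpa using hmul_sSup q (∅ : Set L)]
      exact bot_mul' s
    have e2 : q * nb * nb = q * nb := by rw [mul_assoc, hnb]
    rw [sup_mul', mul_sup', mul_sup', e1, e2]
    refine sup_le (hpq.trans le_sup_left) (sup_le ?_ ?_)
    · exact sup_le (le_sup_of_le_left hqbs) le_sup_right
    · exact sup_le bot_le le_sup_right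
  have hlfp_le : OrderHom.lfp f ≤ q ⊔ q * nb := OrderHom.lfp_le f hpre
  -- ≤ direction
  have hle : OrderHom.lfp f * nb ≤ ⨆ n : ℕ, p * (b * s) ^ n * nb := by
    calc OrderHom.lfp f * nb ≤ (q ⊔ q * nb) * nb := mul_le_mul_right' _ hlfp_le
      _ = q * nb := by rw [sup_mul', mul_assoc, hnb, sup_idem]
      _ = ⨆ n : ℕ, p * (b * s) ^ n * nb := by rw [hq, iSup_mul']
  -- ≥ direction
  have hge : ∀ n : ℕ, p * (b * s) ^ n ≤ OrderHom.lfp f := by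
    intro n
    induction n with
    | zero => simpa using le_sup_left.trans hfix.le
    | succ n ih =>
      have : p * (b * s) ^ (n + 1) = p * (b * s) ^ n * (b * s) := by
        rw [pow_succ, mul_assoc]
      rw [this]
      calc p * (b * s) ^ n * (b * s) ≤ OrderHom.lfp f * (b * s) :=
            mul_le_mul_right' _ ih
        _ ≤ OrderHom.lfp f * (b * s ⊔ nb) := mul_le_mul_left' _ le_sup_left
        _ ≤ OrderHom.lfp f := le_sup_right.trans hfix.le
  refine le_antisymm hle (iSup_le fun n => mul_le_mul_right' _ (hge n))
end
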